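/- Let B(z,R) be a disc and let Q₁,...,Q_{R/r} be R/r essentially pairwise disjoint squares of side length √(πrR) contained in B(z, R(1+4√(r/R))), where r < R/16 and R/r ∈ ℕ. Then the normalized Lebesgue measure of the symmetric difference of B(z,R) and the union of the squares is at most C·r^{1/2}·R^{3/2} for an absolute constant C. -/

import Mathlib

/-!
The disc `B(z, R)` and the union of the squares both lie in the disc `B(z, R')`,
`R' = R(1 + 4√(r/R))`. The disc has measure `R²`, and since the squares have disjoint interiors
their union has measure at least `(R/r) · rR = R²`. So each half of the symmetric difference is
contained in a set of measure at most `R'² - R² ≤ 12 √r R^{3/2}`.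
-/

open MeasureTheory Metric Complex Real

/-- The closed axis-parallel square of center `c` and side length `s`. -/
def closedSquare (c : ℂ) (s : ℝ) : Set ℂ :=
  {w : ℂ | |w.re - c.re| ≤ s / 2 ∧ |w.im - c.im| ≤ s / 2}

/-- Planar Lebesgue measure normalized so that `m₂(B(0,1)) = 1`. -/
noncomputable def m2 : Measure ℂ := (ENNReal.ofReal π)⁻¹ • volume

theorem Complex.volume_reProdIm (s t : Set ℝ) : volume (s ×ℂ t) = volume s * volume t := by
  rw [← Measure.prod_prod, ← Measure.volume_eq_prod]
  exact volume_preserving_equiv_real_prod.measure_preimage_equiv (s ×ˢ t)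

theorem closedSquare_eq_reProdIm (c : ℂ) (s : ℝ) :
    closedSquare c s =
      Set.Icc (c.re - s / 2) (c.re + s / 2) ×ℂ Set.Icc (c.im - s / 2) (c.im + s / 2) := by
  ext w
  simp only [closedSquare, mem_reProdIm, Set.mem_Icc, abs_sub_le_iff]
  constructor <;> rintro ⟨⟨h1, h2⟩, h3, h4⟩ <;>
    refine ⟨⟨?_, ?_⟩, ?_, ?_⟩ <;> linarith

theorem isClosed_closedSquare (c : ℂ) (s : ℝ) : IsClosed (closedSquare c s) := by
  rw [closedSquare_eq_reProdIm]
  exact isClosed_Icc.reProdIm isClosed_Icc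

theorem volume_interior_closedSquare (c : ℂ) (s : ℝ) :
    volume (interior (closedSquare c s)) = ENNReal.ofReal s * ENNReal.ofReal s := by
  rw [closedSquare_eq_reProdIm, interior_reProdIm, interior_Icc, interior_Icc,
    Complex.volume_reProdIm, Real.volume_Ioo, Real.volume_Ioo]
  ring_nf

theorem m2_apply (s : Set ℂ) : m2 s = volume s / ENNReal.ofReal π := by
  rw [m2, Measure.smul_apply, smul_eq_mul, ENNReal.div_eq_inv_mul]

theorem m2_closedBall (z : ℂ) {R : ℝ} (hR : 0 ≤ R) :
    m2 (closedBall z R) = ENNReal.ofReal (R ^ 2) := by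
  rw [m2_apply, Complex.volume_closedBall, ← ENNReal.ofReal_coe_nnreal, NNReal.coe_real_pi,
    ENNReal.mul_div_cancel_right (by simp [pi_pos]) ENNReal.ofReal_ne_top, ENNReal.ofReal_pow hR]

theorem m2_interior_closedSquare_sqrt (c : ℂ) {a : ℝ} (ha : 0 ≤ a) :
    m2 (interior (closedSquare c √(π * a))) = ENNReal.ofReal a := by
  rw [m2_apply, volume_interior_closedSquare, ← ENNReal.ofReal_mul (sqrt_nonneg _),
    mul_self_sqrt (by positivity), ENNReal.ofReal_mul pi_pos.le,
    mul_comm, ENNReal.mul_div_cancel_right (by simp [pi_pos]) ENNReal.ofReal_ne_top]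

theorem sum_measure_interior_le_measure_iUnion {X ι : Type*} [TopologicalSpace X]
    [MeasurableSpace X] [OpensMeasurableSpace X] [Fintype ι] (μ : Measure X) {S : ι → Set X}
    (hS : Pairwise (fun i j => Disjoint (interior (S i)) (interior (S j)))) :
    ∑ i, μ (interior (S i)) ≤ μ (⋃ i, S i) := by
  calc ∑ i, μ (interior (S i)) = μ (⋃ i, interior (S i)) := by
        rw [measure_iUnion hS fun i => isOpen_interior.measurableSet, tsum_fintype]
    _ ≤ μ (⋃ i, S i) := measure_mono (Set.iUnion_mono fun i => interior_subset)

theorem measure_symmDiff_le_two_mul_sub {X : Type*} [MeasurableSpace X] {μ : Measure X}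
    {A B U : Set X} (hAU : A ⊆ U) (hBU : B ⊆ U) (hA : NullMeasurableSet A μ)
    (hB : NullMeasurableSet B μ) (hU : μ U ≠ ⊤) {c : ENNReal} (hcA : c ≤ μ A)
    (hcB : c ≤ μ B) :
    μ (symmDiff A B) ≤ 2 * (μ U - c) := by
  have hsub : symmDiff A B ⊆ (U \ B) ∪ (U \ A) := by
    rintro w (⟨hwA, hwB⟩ | ⟨hwB, hwA⟩)
    · exact Or.inl ⟨hAU hwA, hwB⟩
    · exact Or.inr ⟨hBU hwB, hwA⟩
  calc μ (symmDiff A B) ≤ μ (U \ B) + μ (U \ A) :=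
        (measure_mono hsub).trans (measure_union_le _ _)
    _ = (μ U - μ B) + (μ U - μ A) := by
      rw [measure_sdiff hBU hB (measure_ne_top_of_subset hBU hU),
        measure_sdiff hAU hA (measure_ne_top_of_subset hAU hU)]
    _ ≤ (μ U - c) + (μ U - c) := by gcongr
    _ = 2 * (μ U - c) := (two_mul _).symm

theorem sq_mul_one_add_four_sqrt_sub_sq_le {r R : ℝ} (hr : 0 ≤ r) (hR : 0 < R)
    (hrR : 16 * r ≤ R) :
    (R * (1 + 4 * √(r / R))) ^ 2 - R ^ 2 ≤ 12 * (√r * R * √R) := by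
  set t := √(r / R) with ht_def
  have ht : 0 ≤ t := sqrt_nonneg _
  have ht4 : t ≤ 1 / 4 := by
    rw [sqrt_le_left (by norm_num), div_le_iff₀ hR]; linarith
  have hsqrt : √r * R * √R = R ^ 2 * t := by
    rw [ht_def, sqrt_div hr]; field_simp; rw [sq_sqrt hR.le]
  rw [hsqrt]
  nlinarith [mul_nonneg (sq_nonneg R) ht,
    mul_le_mul_of_nonneg_left ht4 (mul_nonneg (sq_nonneg R) ht)]

theorem stmt8 :
    ∃ C : ℝ, 0 < C ∧
      ∀ (z : ℂ) (r R : ℝ) (N : ℕ) (centers : Fin N → ℂ),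
        0 < r → r < R / 16 → 0 < N → (N : ℝ) * r = R →
        (∀ j, closedSquare (centers j) (Real.sqrt (π * r * R)) ⊆
            closedBall z (R * (1 + 4 * Real.sqrt (r / R)))) →
        Pairwise (fun j k : Fin N =>
          Disjoint (interior (closedSquare (centers j) (Real.sqrt (π * r * R))))
                   (interior (closedSquare (centers k) (Real.sqrt (π * r * R))))) →
        m2 (symmDiff (closedBall z R)
            (⋃ j, closedSquare (centers j) (Real.sqrt (π * r * R))))
          ≤ ENNReal.ofReal (C * Real.sqrt r * R * Real.sqrt R) := by
  refine ⟨24, by norm_num, fun z r R N centers hr hrR _ hNr hsub hdisj => ?_⟩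
  have hR : 0 < R := by linarith
  set R' := R * (1 + 4 * √(r / R))
  have hRR' : R ≤ R' := le_mul_of_one_le_right hR.le (by linarith [sqrt_nonneg (r / R)])
  have hsquares : ENNReal.ofReal (R ^ 2) ≤ m2 (⋃ j, closedSquare (centers j) √(π * r * R)) :=
    calc ENNReal.ofReal (R ^ 2) = ∑ _j : Fin N, ENNReal.ofReal (r * R) := by
          rw [Finset.sum_const, Finset.card_univ, Fintype.card_fin, nsmul_eq_mul,
            ← ENNReal.ofReal_natCast, ← ENNReal.ofReal_mul N.cast_nonneg, ← mul_assoc, hNr,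
            sq]
      _ = ∑ j, m2 (interior (closedSquare (centers j) √(π * r * R))) := by
          simp only [mul_assoc π, m2_interior_closedSquare_sqrt _ (mul_pos hr hR).le]
      _ ≤ _ := sum_measure_interior_le_measure_iUnion m2 hdisj
  calc _ ≤ 2 * (m2 (closedBall z R') - ENNReal.ofReal (R ^ 2)) :=
        measure_symmDiff_le_two_mul_sub (closedBall_subset_closedBall hRR')
          (Set.iUnion_subset hsub) measurableSet_closedBall.nullMeasurableSet
          (.iUnion fun _ => (isClosed_closedSquare _ _).measurableSet.nullMeasurableSet)
          (by rw [m2_closedBall z (hR.le.trans hRR')]; exact ENNReal.ofReal_ne_top)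
          (m2_closedBall z hR.le).ge hsquares
    _ = ENNReal.ofReal (2 * (R' ^ 2 - R ^ 2)) := by
        rw [m2_closedBall z (hR.le.trans hRR'), ← ENNReal.ofReal_sub _ (sq_nonneg R),
          ENNReal.ofReal_mul zero_le_two, ENNReal.ofReal_ofNat]
    _ ≤ ENNReal.ofReal (24 * √r * R * √R) := ENNReal.ofReal_le_ofReal <| by
        linarith [sq_mul_one_add_four_sqrt_sub_sq_le hr.le hR (by linarith)]
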